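/- arXiv:2011.07324 — 3 statements merged into one kernel-verified Lean document; each statement's English description precedes it below -/
import Mathlib

section
/- For every fixed z ∈ [0,1], the function g(s) = (e^{(z−1)s} − e^{−s})/(1 − e^{−s}) is non-increasing on (0,∞). -/
/-!
Multiplying numerator and denominator by `e^s` turns the function into
`(u^z - 1) / (u - 1)` with `u = e^s`, the slope of the secant of `u ↦ u^z` through `1`.
For `z ∈ [0, 1]` this power is concave on `[0, ∞)`, so its secant slopes from a fixed point are
antitone, and `s ↦ e^s` is increasing.
-/

open Real Set

lemma antitoneOn_slope_rpow_one {z : ℝ} (hz : z ∈ Icc (0 : ℝ) 1) :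
    AntitoneOn (slope (fun u : ℝ => u ^ z) 1) (Ioi 1) :=
  ((concaveOn_rpow hz.1 hz.2).antitoneOn_slope_gt (mem_Ici.2 zero_le_one)).mono
    fun _ hu => ⟨mem_Ici.2 (zero_le_one.trans hu.le), hu⟩

lemma exp_sub_exp_div_one_sub_exp_eq_slope (z s : ℝ) :
    (exp ((z - 1) * s) - exp (-s)) / (1 - exp (-s)) = slope (fun u : ℝ => u ^ z) 1 (exp s) := by
  have hnum : exp ((z - 1) * s) - exp (-s) = exp (-s) * (exp s ^ z - 1) := by
    rw [← exp_mul, mul_sub, ← exp_add, mul_one]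
    ring_nf
  have hden : 1 - exp (-s) = exp (-s) * (exp s - 1) := by
    rw [mul_sub, ← exp_add, neg_add_cancel, exp_zero, mul_one]
  rw [hnum, hden, mul_div_mul_left _ _ (exp_pos _).ne', slope_def_field, one_rpow]

/-- For every fixed `z ∈ [0,1]`, the function
`s ↦ (e^{(z-1)s} - e^{-s}) / (1 - e^{-s})` is non-increasing on `(0, ∞)`. -/
theorem conditioned_poisson_pgf_antitone (z : ℝ) (hz : z ∈ Set.Icc (0 : ℝ) 1) :
    AntitoneOn (fun s : ℝ =>
      (Real.exp ((z - 1) * s) - Real.exp (-s)) / (1 - Real.exp (-s))) (Set.Ioi 0) := by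
  intro s hs t ht hst
  simp only [exp_sub_exp_div_one_sub_exp_eq_slope]
  exact antitoneOn_slope_rpow_one hz (one_lt_exp_iff.2 hs) (one_lt_exp_iff.2 ht)
    (exp_le_exp.2 hst)
end

section
/- Let (Xₙ) be a sequence of ℕ-valued random variables and X an ℕ-valued random variable such that the probability generating functions converge pointwise: E[z^{Xₙ}] → E[z^X] for every z ∈ [0,1). Then Xₙ converges to X in distribution; that is, P[Xₙ = k] → P[X = k] as n → ∞ for every k ∈ ℕ. -/
/-!
The difference of the generating functions of `Xₙ` and `X` is a power series `∑ⱼ dₙⱼ zʲ` whose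
coefficients `dₙⱼ = P[Xₙ = j] - P[X = j]` are uniformly bounded. Assume by strong induction that
`dₙⱼ → 0` for `j < k`. Subtracting the first `k` terms and dividing by `zᵏ` leaves `dₙₖ` plus a
tail of size `O(z / (1 - z))`, and this quantity tends to `0` as `n → ∞`. Hence
`limsup |dₙₖ| = O(z / (1 - z))` for every `z ∈ (0, 1)`, and letting `z → 0` gives `dₙₖ → 0`.
-/

open MeasureTheory Filter Topology Finset

lemma tendsto_zero_of_forall_eventually_abs_sub_le {ι : Type*} {l : Filter ι} {f : ι → ℝ}
    (h : ∀ ε > 0, ∃ u : ι → ℝ, Tendsto u l (𝓝 0) ∧ ∀ᶠ i in l, |f i - u i| ≤ ε) :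
    Tendsto f l (𝓝 0) := by
  rw [Metric.tendsto_nhds]
  intro ε hε
  obtain ⟨u, hu, hfu⟩ := h (ε / 2) (half_pos hε)
  filter_upwards [Metric.tendsto_nhds.1 hu (ε / 2) (half_pos hε), hfu] with i hui hfi
  rw [Real.dist_eq, sub_zero] at hui ⊢
  linarith [abs_sub_abs_le_abs_sub (f i) (u i)]

section PowerSeries

variable {c : ℕ → ℝ} {C z : ℝ}

lemma norm_mul_pow_le_of_abs_le (hc : ∀ j, |c j| ≤ C) (hz : 0 ≤ z) (j : ℕ) :
    ‖c j * z ^ j‖ ≤ C * z ^ j := by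
  rw [Real.norm_eq_abs, abs_mul, abs_pow, abs_of_nonneg hz]
  exact mul_le_mul_of_nonneg_right (hc j) (by positivity)

lemma summable_mul_pow_of_abs_le (hc : ∀ j, |c j| ≤ C) (hz0 : 0 ≤ z) (hz1 : z < 1) :
    Summable fun j => c j * z ^ j :=
  .of_norm_bounded ((summable_geometric_of_lt_one hz0 hz1).mul_left C)
    (norm_mul_pow_le_of_abs_le hc hz0)

lemma abs_tsum_mul_pow_le (hc : ∀ j, |c j| ≤ C) (hz0 : 0 ≤ z) (hz1 : z < 1) :
    |∑' j, c j * z ^ j| ≤ C * (1 - z)⁻¹ :=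
  tsum_of_norm_bounded ((hasSum_geometric_of_lt_one hz0 hz1).mul_left C)
    (norm_mul_pow_le_of_abs_le hc hz0)

lemma tsum_mul_pow_eq_sum_range_add (hc : Summable fun j => c j * z ^ j) (k : ℕ) :
    ∑' j, c j * z ^ j =
      ∑ j ∈ range k, c j * z ^ j + z ^ k * (c k + z * ∑' j, c (j + k + 1) * z ^ j) := by
  rw [← hc.sum_add_tsum_nat_add (k + 1), sum_range_succ, add_assoc, mul_add, ← mul_assoc,
    ← pow_succ, ← tsum_mul_left]
  congr 2
  · ring
  · exact tsum_congr fun j => by rw [← add_assoc, pow_add]; ring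

theorem tendsto_coeff_zero_of_tendsto_tsum_mul_pow {d : ℕ → ℕ → ℝ} (hd : ∀ n j, |d n j| ≤ C)
    (h : ∀ z ∈ Set.Ioo (0 : ℝ) 1, Tendsto (fun n => ∑' j, d n j * z ^ j) atTop (𝓝 0)) (k : ℕ) :
    Tendsto (fun n => d n k) atTop (𝓝 0) := by
  induction k using Nat.strong_induction_on with
  | _ k ih =>
  refine tendsto_zero_of_forall_eventually_abs_sub_le fun ε hε => ?_
  have hsmall : ∀ᶠ z in 𝓝[>] (0 : ℝ), z < 1 ∧ C * z / (1 - z) < ε := by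
    have hcont : ContinuousAt (fun z : ℝ => C * z / (1 - z)) 0 :=
      ContinuousAt.div (by fun_prop) (by fun_prop) (by norm_num)
    refine nhdsWithin_le_nhds ((gt_mem_nhds one_pos).and (hcont.eventually (gt_mem_nhds ?_)))
    simpa using hε
  obtain ⟨z, ⟨hz1, hzε⟩, hz0⟩ := (hsmall.and self_mem_nhdsWithin).exists
  have hzk : z ^ k ≠ 0 := pow_ne_zero k hz0.ne'
  set u : ℕ → ℝ := fun n => (∑' j, d n j * z ^ j - ∑ j ∈ range k, d n j * z ^ j) / z ^ k
  have hu : Tendsto u atTop (𝓝 0) := by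
    have hsum : Tendsto (fun n => ∑ j ∈ range k, d n j * z ^ j) atTop (𝓝 0) := by
      simpa using tendsto_finsetSum (range k) fun j hj =>
        (ih j (mem_range.1 hj)).mul_const (z ^ j)
    simpa using ((h z ⟨hz0, hz1⟩).sub hsum).div_const (z ^ k)
  refine ⟨u, hu, Eventually.of_forall fun n => ?_⟩
  have hsplit := tsum_mul_pow_eq_sum_range_add
    (summable_mul_pow_of_abs_le (hd n) hz0.le hz1) k
  have hdiff : d n k - u n = -(z * ∑' j, d n (j + k + 1) * z ^ j) := by
    simp only [u, hsplit]
    field_simp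
    ring
  rw [hdiff, abs_neg, abs_mul, abs_of_pos hz0]
  calc z * |∑' j, d n (j + k + 1) * z ^ j| ≤ z * (C * (1 - z)⁻¹) :=
        mul_le_mul_of_nonneg_left (abs_tsum_mul_pow_le (fun j => hd n _) hz0.le hz1) hz0.le
    _ = C * z / (1 - z) := by ring
    _ ≤ ε := hzε.le

theorem tendsto_coeff_of_tendsto_tsum_mul_pow {a : ℕ → ℕ → ℝ} {b : ℕ → ℝ}
    (ha : ∀ n j, |a n j| ≤ C) (hb : ∀ j, |b j| ≤ C)
    (h : ∀ z ∈ Set.Ioo (0 : ℝ) 1,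
      Tendsto (fun n => ∑' j, a n j * z ^ j) atTop (𝓝 (∑' j, b j * z ^ j))) (k : ℕ) :
    Tendsto (fun n => a n k) atTop (𝓝 (b k)) := by
  have hd : ∀ n j, |a n j - b j| ≤ C + C := fun n j =>
    (abs_sub _ _).trans (add_le_add (ha n j) (hb j))
  refine tendsto_sub_nhds_zero_iff.1 (tendsto_coeff_zero_of_tendsto_tsum_mul_pow hd
    (fun z hz => ?_) k)
  have hsub : ∀ n, ∑' j, (a n j - b j) * z ^ j = ∑' j, a n j * z ^ j - ∑' j, b j * z ^ j :=
    fun n => by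
      simp only [sub_mul]
      exact (summable_mul_pow_of_abs_le (ha n) hz.1.le hz.2).tsum_sub
        (summable_mul_pow_of_abs_le hb hz.1.le hz.2)
  simpa only [hsub] using tendsto_sub_nhds_zero_iff.2 (h z hz)

end PowerSeries

lemma integral_pow_eq_tsum {Ω : Type*} [MeasurableSpace Ω] {μ : Measure Ω} [IsFiniteMeasure μ]
    {X : Ω → ℕ} (hX : Measurable X) {z : ℝ} (hz : |z| ≤ 1) :
    ∫ ω, z ^ X ω ∂μ = ∑' j, μ.real {ω | X ω = j} * z ^ j := by
  have hint : Integrable (fun j : ℕ => z ^ j) (μ.map X) :=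
    .of_bound (C := 1) measurable_from_nat.aestronglyMeasurable (Eventually.of_forall fun j => by
      rw [Real.norm_eq_abs, abs_pow]; exact pow_le_one₀ (abs_nonneg z) hz)
  rw [← integral_map hX.aemeasurable hint.aestronglyMeasurable, integral_countable hint]
  exact tsum_congr fun j => by rw [map_measureReal_apply hX (measurableSet_singleton j)]; rfl

/-- If the probability generating functions of ℕ-valued random variables `Xₙ` converge
pointwise on `[0, 1)` to the probability generating function of an ℕ-valued random
variable `X`, then `Xₙ` converges to `X` in distribution, i.e.
`P[Xₙ = k] → P[X = k]` for every `k`. -/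
theorem pgf_convergence_implies_convergence_in_distribution
    {Ω : Type*} [MeasurableSpace Ω] (μ : Measure Ω) [IsProbabilityMeasure μ]
    (X : ℕ → Ω → ℕ) (Y : Ω → ℕ)
    (hX : ∀ n, Measurable (X n)) (hY : Measurable Y)
    (h : ∀ z ∈ Set.Ico (0 : ℝ) 1,
      Tendsto (fun n => ∫ ω, z ^ X n ω ∂μ) atTop (nhds (∫ ω, z ^ Y ω ∂μ))) :
    ∀ k : ℕ, Tendsto (fun n => (μ {ω | X n ω = k}).toReal) atTop
      (nhds ((μ {ω | Y ω = k}).toReal)) := by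
  have hprob : ∀ (Z : Ω → ℕ) (j : ℕ), |μ.real {ω | Z ω = j}| ≤ 1 := fun Z j => by
    rw [abs_of_nonneg measureReal_nonneg]; exact measureReal_le_one
  refine tendsto_coeff_of_tendsto_tsum_mul_pow (fun n => hprob (X n)) (hprob Y) fun z hz => ?_
  have hz1 : |z| ≤ 1 := by rw [abs_of_pos hz.1]; exact hz.2.le
  simpa only [integral_pow_eq_tsum (hX _) hz1, integral_pow_eq_tsum hY hz1, measureReal_def] using
    h z (Set.Ioo_subset_Ico_self hz)
end

section
/- Let X be a nonnegative random variable, β ≥ 0, and let Λ be a measure on (0,∞) with ∫₀^∞ min{x,1} Λ(dx) < ∞; set Ψ(u) = βu + ∫₀^∞ (1 − e^{−ux}) Λ(dx). If E[exp(−u·X)] = exp(−Ψ(u)) holds for all u ∈ [0,1], then E[exp(−u·X)] = exp(−Ψ(u)) holds for all u ≥ 0. -/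
/-!
Write `f(u) = E[e^{-uX}]`. The Lévy integral in `Ψ` is not itself a Laplace transform, but its
derivative `∫ x e^{-ux} Λ(dx)` is one, namely that of the measure `x Λ(dx)`. Hence
`F(u) = log f(u) + Ψ(u)` has a real-analytic derivative on `(0, ∞)`, since `log f` is a cumulant
generating function. `F` vanishes on `(0, 1)`, so its derivative vanishes there, hence on all of
`(0, ∞)` by the identity theorem, and `F` is identically zero.
-/

open MeasureTheory Real Set Filter Topology ProbabilityTheory
open scoped ENNReal NNReal

theorem Real.mul_exp_neg_mul_le_max_mul_min {s x : ℝ} (hs : 0 < s) (hx : 0 ≤ x) :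
    x * exp (-s * x) ≤ max s⁻¹ 1 * min x 1 := by
  have hle_x : x * exp (-s * x) ≤ x :=
    mul_le_of_le_one_right hx (exp_le_one_iff.2 (by nlinarith))
  have hle_inv : x * exp (-s * x) ≤ s⁻¹ := by
    rw [← mul_one s⁻¹, le_inv_mul_iff₀ hs, ← mul_assoc, neg_mul]
    exact (mul_exp_neg_le_exp_neg_one _).trans (exp_le_one_iff.2 (by norm_num))
  rcases le_total x 1 with hx1 | hx1
  · rw [min_eq_left hx1]
    exact hle_x.trans (le_mul_of_one_le_left hx (le_max_right _ _))
  · rw [min_eq_right hx1, mul_one]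
    exact hle_inv.trans (le_max_left _ _)

theorem Real.abs_one_sub_exp_neg_mul_le_max_mul_min {u x : ℝ} (hu : 0 ≤ u) (hx : 0 ≤ x) :
    |1 - exp (-u * x)| ≤ max u 1 * min x 1 := by
  have hexp_le : exp (-u * x) ≤ 1 := exp_le_one_iff.2 (by nlinarith)
  have hlin : 1 - exp (-u * x) ≤ u * x := by
    have := one_sub_le_exp_neg (u * x)
    rw [← neg_mul] at this
    linarith
  rw [abs_of_nonneg (sub_nonneg.2 hexp_le)]
  rcases le_total x 1 with hx1 | hx1
  · rw [min_eq_left hx1]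
    exact hlin.trans (mul_le_mul_of_nonneg_right (le_max_left _ _) hx)
  · rw [min_eq_right hx1, mul_one]
    linarith [exp_pos (-u * x), le_max_right u 1]

theorem eqOn_zero_of_hasDerivAt_of_analyticOnNhd {𝕜 E : Type*} [RCLike 𝕜]
    [NormedAddCommGroup E] [NormedSpace 𝕜 E] [CompleteSpace E] {F F' : 𝕜 → E} {U : Set 𝕜}
    (hU : IsOpen U) (hUc : IsPreconnected U) (hF : ∀ x ∈ U, HasDerivAt F (F' x) x)
    (hF' : AnalyticOnNhd 𝕜 F' U) {x₀ : 𝕜} (hx₀ : x₀ ∈ U) (h₀ : F =ᶠ[𝓝 x₀] 0) :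
    EqOn F 0 U := by
  have hF'_near : F' =ᶠ[𝓝 x₀] 0 := by
    filter_upwards [h₀.eventually_nhds, hU.mem_nhds hx₀] with x hx hxU
    exact (hF x hxU).unique ((hasDerivAt_const x (0 : E)).congr_of_eventuallyEq hx)
  have hF'_zero := hF'.eqOn_zero_of_preconnected_of_eventuallyEq_zero hUc hx₀ hF'_near
  intro x hx
  rw [hU.is_const_of_deriv_eq_zero hUc (fun y hy ↦ (hF y hy).differentiableAt.differentiableWithinAt)
    (fun y hy ↦ (hF y hy).deriv.trans (hF'_zero hy)) hx hx₀]
  exact h₀.eq_of_nhds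

noncomputable def laplaceExponent (β : ℝ) (ν : Measure ℝ) (u : ℝ) : ℝ :=
  β * u + ∫ x, (1 - exp (-u * x)) ∂ν

section LevyMeasure

variable {ν : Measure ℝ}

theorem integrable_one_sub_exp_neg_mul (hν : ∀ᵐ x ∂ν, 0 ≤ x)
    (hmin : Integrable (fun x ↦ min x 1) ν) {u : ℝ} (hu : 0 ≤ u) :
    Integrable (fun x ↦ 1 - exp (-u * x)) ν := by
  refine (hmin.const_mul (max u 1)).mono' (by fun_prop) ?_
  filter_upwards [hν] with x hx
  exact Real.abs_one_sub_exp_neg_mul_le_max_mul_min hu hx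

theorem integrable_mul_exp_neg_mul (hν : ∀ᵐ x ∂ν, 0 ≤ x)
    (hmin : Integrable (fun x ↦ min x 1) ν) {s : ℝ} (hs : 0 < s) :
    Integrable (fun x ↦ x * exp (-s * x)) ν := by
  refine (hmin.const_mul (max s⁻¹ 1)).mono' (by fun_prop) ?_
  filter_upwards [hν] with x hx
  rw [norm_of_nonneg (by positivity)]
  exact Real.mul_exp_neg_mul_le_max_mul_min hs hx

theorem hasDerivAt_integral_one_sub_exp_neg_mul (hν : ∀ᵐ x ∂ν, 0 ≤ x)
    (hmin : Integrable (fun x ↦ min x 1) ν) {u : ℝ} (hu : 0 < u) :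
    HasDerivAt (fun u ↦ ∫ x, (1 - exp (-u * x)) ∂ν) (∫ x, x * exp (-u * x) ∂ν) u := by
  have hbound : ∀ᵐ x ∂ν, ∀ t ∈ Metric.ball u (u / 2),
      ‖x * exp (-t * x)‖ ≤ x * exp (-(u / 2) * x) := by
    filter_upwards [hν] with x hx t ht
    rw [Real.ball_eq_Ioo, mem_Ioo] at ht
    rw [norm_of_nonneg (by positivity)]
    gcongr
    linarith
  have hderiv : ∀ᵐ x ∂ν, ∀ t ∈ Metric.ball u (u / 2),
      HasDerivAt (fun t ↦ 1 - exp (-t * x)) (x * exp (-t * x)) t := by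
    refine ae_of_all _ fun x t _ ↦ ?_
    simpa [mul_comm] using ((hasDerivAt_neg t).mul_const x).exp.const_sub 1
  exact (hasDerivAt_integral_of_dominated_loc_of_deriv_le (Metric.ball_mem_nhds u (half_pos hu))
    (.of_forall fun t ↦ by fun_prop) (integrable_one_sub_exp_neg_mul hν hmin hu.le)
    (by fun_prop) hbound (integrable_mul_exp_neg_mul hν hmin (half_pos hu)) hderiv).2

theorem analyticOnNhd_integral_mul_exp_neg_mul (hν : ∀ᵐ x ∂ν, 0 ≤ x)
    (hmin : Integrable (fun x ↦ min x 1) ν) :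
    AnalyticOnNhd ℝ (fun u ↦ ∫ x, x * exp (-u * x) ∂ν) (Ioi 0) := by
  set ρ := ν.withDensity fun x ↦ (x.toNNReal : ℝ≥0∞)
  have hmeas : Measurable fun x : ℝ ↦ x.toNNReal := measurable_real_toNNReal
  have hsmul : ∀ g : ℝ → ℝ, (fun x ↦ x.toNNReal • g x) =ᵐ[ν] fun x ↦ x * g x := fun g ↦ by
    filter_upwards [hν] with x hx
    rw [NNReal.smul_def, smul_eq_mul, coe_toNNReal x hx]
  have hρ : Iio 0 ⊆ interior (integrableExpSet id ρ) := by
    refine isOpen_Iio.subset_interior_iff.2 fun t ht ↦ ?_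
    refine (integrable_withDensity_iff_integrable_smul hmeas).2 ((integrable_congr (hsmul _)).2 ?_)
    simpa using integrable_mul_exp_neg_mul hν hmin (neg_pos.2 ht)
  intro u hu
  have hmgf := analyticAt_mgf (hρ (mem_Iio.2 (neg_neg_of_pos hu)))
  convert hmgf.comp analyticAt_id.neg using 1
  funext v
  rw [Function.comp_apply, mgf, integral_withDensity_eq_integral_smul hmeas]
  exact integral_congr_ae (hsmul _).symm

theorem hasDerivAt_laplaceExponent (β : ℝ) (hν : ∀ᵐ x ∂ν, 0 ≤ x)
    (hmin : Integrable (fun x ↦ min x 1) ν) {u : ℝ} (hu : 0 < u) :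
    HasDerivAt (laplaceExponent β ν) (β + ∫ x, x * exp (-u * x) ∂ν) u :=
  ((hasDerivAt_id u).const_mul β).add (hasDerivAt_integral_one_sub_exp_neg_mul hν hmin hu)
    |>.congr_deriv (by simp)

end LevyMeasure

theorem Iio_subset_interior_integrableExpSet {Ω : Type*} [MeasurableSpace Ω] {μ : Measure Ω}
    [IsFiniteMeasure μ] {X : Ω → ℝ} (hX : AEMeasurable X μ) (hX₀ : ∀ᵐ ω ∂μ, 0 ≤ X ω) :
    Iio 0 ⊆ interior (integrableExpSet X μ) := by
  refine isOpen_Iio.subset_interior_iff.2 fun t ht ↦ ?_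
  refine (integrable_const 1).mono' (by fun_prop) ?_
  filter_upwards [hX₀] with ω hω
  rw [norm_of_nonneg (exp_pos _).le, exp_le_one_iff]
  exact mul_nonpos_of_nonpos_of_nonneg (le_of_lt ht) hω

theorem laplace_identity_extends_general {Ω : Type*} [MeasurableSpace Ω]
    (μ : Measure Ω) [IsProbabilityMeasure μ] (X : Ω → ℝ)
    (hXmeas : Measurable X) (hXnonneg : ∀ᵐ ω ∂μ, 0 ≤ X ω)
    (β : ℝ) (Λ : Measure ℝ)
    (hΛ : (∫⁻ x in Set.Ioi (0 : ℝ), ENNReal.ofReal (min x 1) ∂Λ) < ⊤)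
    (h : ∀ u ∈ Set.Icc (0 : ℝ) 1,
      (∫ ω, Real.exp (-u * X ω) ∂μ) =
        Real.exp (-(β * u + ∫ x in Set.Ioi (0 : ℝ), (1 - Real.exp (-u * x)) ∂Λ))) :
    ∀ u : ℝ, 0 ≤ u →
      (∫ ω, Real.exp (-u * X ω) ∂μ) =
        Real.exp (-(β * u + ∫ x in Set.Ioi (0 : ℝ), (1 - Real.exp (-u * x)) ∂Λ)) := by
  set ν := Λ.restrict (Ioi 0)
  have hν : ∀ᵐ x ∂ν, 0 ≤ x := (ae_restrict_mem measurableSet_Ioi).mono fun _ hx ↦ le_of_lt hx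
  have hmin : Integrable (fun x ↦ min x 1) ν :=
    ⟨by fun_prop, (hasFiniteIntegral_iff_ofReal (hν.mono fun _ hx ↦ le_min hx zero_le_one)).2 hΛ⟩
  have hX := Iio_subset_interior_integrableExpSet hXmeas.aemeasurable hXnonneg
  have hcgf : AnalyticOnNhd ℝ (fun u ↦ cgf X μ (-u)) (Ioi 0) := fun u hu ↦
    (analyticAt_cgf (hX (mem_Iio.2 (neg_neg_of_pos hu)))).comp analyticAt_id.neg
  have hzero : EqOn (fun u ↦ cgf X μ (-u) + laplaceExponent β ν u) 0 (Ioi 0) := by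
    refine eqOn_zero_of_hasDerivAt_of_analyticOnNhd isOpen_Ioi isPreconnected_Ioi
      (fun u hu ↦ (hcgf u hu).differentiableAt.hasDerivAt.add
        (hasDerivAt_laplaceExponent β hν hmin hu))
      (hcgf.deriv.add (analyticOnNhd_const.add (analyticOnNhd_integral_mul_exp_neg_mul hν hmin)))
      (x₀ := 1 / 2) (by norm_num) ?_
    filter_upwards [Ioo_mem_nhds (by norm_num : (0 : ℝ) < 1 / 2) (by norm_num : (1 / 2 : ℝ) < 1)]
      with u hu
    simp only [Pi.zero_apply, cgf, mgf, laplaceExponent]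
    rw [h u (Ioo_subset_Icc_self hu), log_exp, neg_add_cancel]
  intro u hu
  rcases hu.eq_or_lt with rfl | hu
  · exact h 0 (left_mem_Icc.2 zero_le_one)
  · change mgf X μ (-u) = exp (-laplaceExponent β ν u)
    have hint : Integrable (fun ω ↦ exp (-u * X ω)) μ :=
      interior_subset (s := integrableExpSet X μ) (hX (mem_Iio.2 (neg_neg_of_pos hu)))
    rw [← exp_cgf hint, eq_neg_of_add_eq_zero_left (hzero hu)]

/-- If the Laplace transform of a nonnegative random variable `X` agrees with
`exp (-Ψ u)` for all `u ∈ [0, 1]`, where `Ψ u = β u + ∫ (1 - e^{-ux}) Λ(dx)` is a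
Laplace exponent, then the identity extends to all `u ≥ 0`. -/
theorem laplace_identity_extends {Ω : Type*} [MeasurableSpace Ω]
    (μ : Measure Ω) [IsProbabilityMeasure μ] (X : Ω → ℝ)
    (hXmeas : Measurable X) (hXnonneg : ∀ᵐ ω ∂μ, 0 ≤ X ω)
    (β : ℝ) (hβ : 0 ≤ β) (Λ : Measure ℝ) (hΛsupp : Λ (Set.Iic 0) = 0)
    (hΛ : (∫⁻ x in Set.Ioi (0 : ℝ), ENNReal.ofReal (min x 1) ∂Λ) < ⊤)
    (h : ∀ u ∈ Set.Icc (0 : ℝ) 1,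
      (∫ ω, Real.exp (-u * X ω) ∂μ) =
        Real.exp (-(β * u + ∫ x in Set.Ioi (0 : ℝ), (1 - Real.exp (-u * x)) ∂Λ))) :
    ∀ u : ℝ, 0 ≤ u →
      (∫ ω, Real.exp (-u * X ω) ∂μ) =
        Real.exp (-(β * u + ∫ x in Set.Ioi (0 : ℝ), (1 - Real.exp (-u * x)) ∂Λ)) :=
  laplace_identity_extends_general μ X hXmeas hXnonneg β Λ hΛ h
end
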